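/- Let h : S² → ℝ be Lipschitz in the sense that |h(x) − h(y)| ≤ L|x−y| for all x, y ∈ S², let α ∈ ℝ³ with |α| < 1/4, sup|h| ≤ 1/6, and for ξ ∈ S² define φ(x) = (r(x)ξ − α)/(1+h(x)) where r(x) = ⟨ξ,α⟩ + √(⟨ξ,α⟩² − |α|² + (1+h(x))²). Then |φ(x)| = 1 for all x ∈ S², |r(x) − r(y)| ≤ 3|h(x) − h(y)|, and |φ(x) − φ(y)| ≤ 6|h(x) − h(y)| ≤ 6L|x−y| for all x, y ∈ S². In particular, if 6L < 1 then φ is a contraction on S² and has a unique fixed point. -/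

import Mathlib

/-!
With `a = ⟪ξ, α⟫` and `t = 1 + h x`, the number `r(x)` is the positive root of
`r² - 2 a r + ‖α‖² - t² = 0`, i.e. `‖r(x) ξ - α‖ = t`; hence `φ(x)` is a unit vector.
Since `t ∈ [5/6, 7/6]` and `‖α‖ < 1/4`, the radicand stays above `1/4`, so the square root is
Lipschitz in `t` along the relevant range, which gives the bound on `r`. Writing
`φ(x) = t⁻¹ v` with `‖v‖ = t`, the bound on `φ` follows from that on `r` and the factor
`t⁻¹ ≤ 6/5`. For `6L < 1` the map `φ` is then a contraction of the closed sphere, and the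
Banach fixed point theorem applies.
-/

noncomputable def rfun (α ξ : EuclideanSpace ℝ (Fin 3)) (h : EuclideanSpace ℝ (Fin 3) → ℝ)
    (x : EuclideanSpace ℝ (Fin 3)) : ℝ :=
  (inner ℝ ξ α : ℝ) + Real.sqrt ((inner ℝ ξ α : ℝ)^2 - ‖α‖^2 + (1 + h x)^2)

noncomputable def phifun (α ξ : EuclideanSpace ℝ (Fin 3)) (h : EuclideanSpace ℝ (Fin 3) → ℝ)
    (x : EuclideanSpace ℝ (Fin 3)) : EuclideanSpace ℝ (Fin 3) :=
  (1 + h x)⁻¹ • (rfun α ξ h x • ξ - α)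

open Set Metric Function
open scoped NNReal RealInnerProductSpace

theorem existsUnique_fixedPoint_of_lipschitzOnWith {X : Type*} [MetricSpace X] [CompleteSpace X]
    {s : Set X} (hs : IsClosed s) (hne : s.Nonempty) {f : X → X} (hfs : MapsTo f s s)
    {K : ℝ≥0} (hK : K < 1) (hf : LipschitzOnWith K f s) : ∃! x, x ∈ s ∧ f x = x := by
  have : CompleteSpace s := hs.completeSpace_coe
  have : Nonempty s := hne.to_subtype
  have hc : ContractingWith K (hfs.restrict f s s) := ⟨hK, hf.mapsToRestrict hfs⟩
  obtain ⟨p, hp⟩ : ∃ p : s, IsFixedPt (hfs.restrict f s s) p := ⟨_, hc.fixedPoint_isFixedPt⟩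
  refine ⟨p, ⟨p.2, congrArg Subtype.val hp⟩, ?_⟩
  rintro y ⟨hy, hfy⟩
  exact congrArg Subtype.val (hc.fixedPoint_unique' (x := ⟨y, hy⟩) (Subtype.ext hfy) hp)

theorem abs_sqrt_sub_sqrt_le {u v m : ℝ} (hu : 0 ≤ u) (hv : 0 ≤ v) (hm : 0 < m)
    (hmuv : m ≤ √u + √v) : |√u - √v| ≤ |u - v| / m := by
  have hdiff : u - v = (√u - √v) * (√u + √v) := by
    linear_combination -Real.sq_sqrt hu + Real.sq_sqrt hv
  rw [le_div_iff₀ hm, hdiff, abs_mul, abs_of_nonneg (hm.le.trans hmuv)]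
  gcongr

theorem norm_inv_smul_sub_inv_smul_le {E : Type*} [NormedAddCommGroup E] [NormedSpace ℝ E]
    {v w : E} {s t : ℝ} (ht : 0 < t) (hs : 0 < s) (hw : ‖w‖ = s) :
    ‖t⁻¹ • v - s⁻¹ • w‖ ≤ t⁻¹ * (‖v - w‖ + |t - s|) := by
  have hsplit : t⁻¹ • v - s⁻¹ • w = t⁻¹ • ((v - w) + (s⁻¹ * (s - t)) • w) := by
    have : t⁻¹ * (s⁻¹ * (s - t)) = t⁻¹ - s⁻¹ := by field_simp
    rw [smul_add, smul_smul, this, sub_smul, smul_sub]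
    abel
  have hcorr : ‖(s⁻¹ * (s - t)) • w‖ = |t - s| := by
    rw [norm_smul, hw, Real.norm_eq_abs, abs_mul, abs_inv, abs_of_pos hs, abs_sub_comm]
    field_simp
  rw [hsplit, norm_smul, Real.norm_of_nonneg (inv_nonneg.mpr ht.le), ← hcorr]
  gcongr
  exact norm_add_le _ _

section InnerProductSpace

variable {F : Type*} [NormedAddCommGroup F] [InnerProductSpace ℝ F] {ξ α : F}

theorem inner_sq_le_norm_sq_of_norm_eq_one (hξ : ‖ξ‖ = 1) : ⟪ξ, α⟫ ^ 2 ≤ ‖α‖ ^ 2 := by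
  have := abs_real_inner_le_norm ξ α
  rw [hξ, one_mul] at this
  exact sq_le_sq' (abs_le.mp this).1 (abs_le.mp this).2

theorem norm_smul_sub_eq (hξ : ‖ξ‖ = 1) {t : ℝ} (ht : ‖α‖ ≤ t) :
    ‖(⟪ξ, α⟫ + √(⟪ξ, α⟫ ^ 2 - ‖α‖ ^ 2 + t ^ 2)) • ξ - α‖ = t := by
  have hD : 0 ≤ ⟪ξ, α⟫ ^ 2 - ‖α‖ ^ 2 + t ^ 2 := by
    nlinarith [inner_sq_le_norm_sq_of_norm_eq_one (α := α) hξ, norm_nonneg α]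
  rw [← sq_eq_sq₀ (norm_nonneg _) ((norm_nonneg α).trans ht), norm_sub_sq_real,
    real_inner_smul_left, norm_smul, hξ, Real.norm_eq_abs, mul_one, sq_abs]
  linear_combination Real.sq_sqrt hD

end InnerProductSpace

section SphereMap

variable {α ξ : EuclideanSpace ℝ (Fin 3)} {h : EuclideanSpace ℝ (Fin 3) → ℝ}
  {x y : EuclideanSpace ℝ (Fin 3)}

theorem norm_rfun_smul_sub (hξ : ‖ξ‖ = 1) (hx : ‖α‖ ≤ 1 + h x) :
    ‖rfun α ξ h x • ξ - α‖ = 1 + h x :=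
  norm_smul_sub_eq hξ hx

theorem norm_phifun (hξ : ‖ξ‖ = 1) (hx : ‖α‖ < 1 + h x) : ‖phifun α ξ h x‖ = 1 := by
  have ht : 0 < 1 + h x := (norm_nonneg α).trans_lt hx
  rw [phifun, norm_smul, norm_rfun_smul_sub hξ hx.le, norm_inv, Real.norm_of_nonneg ht.le,
    inv_mul_cancel₀ ht.ne']

theorem abs_rfun_sub_le (hξ : ‖ξ‖ = 1) (hα : ‖α‖ < 1 / 4) (hx : |h x| ≤ 1 / 6)
    (hy : |h y| ≤ 1 / 6) : |rfun α ξ h x - rfun α ξ h y| ≤ 3 * |h x - h y| := by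
  have hαξ := inner_sq_le_norm_sq_of_norm_eq_one (α := α) hξ
  have hα0 := norm_nonneg α
  have hradicand : ∀ z, |h z| ≤ 1 / 6 → 1 / 4 ≤ ⟪ξ, α⟫ ^ 2 - ‖α‖ ^ 2 + (1 + h z) ^ 2 :=
    fun z hz ↦ by nlinarith [abs_le.mp hz]
  have hsqrt : ∀ z, |h z| ≤ 1 / 6 → 1 / 2 ≤ √(⟪ξ, α⟫ ^ 2 - ‖α‖ ^ 2 + (1 + h z) ^ 2) :=
    fun z hz ↦ Real.le_sqrt_of_sq_le (by linarith [hradicand z hz])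
  have hsum : |2 + h x + h y| ≤ 3 := by
    rw [abs_le]; constructor <;> linarith [abs_le.mp hx, abs_le.mp hy]
  calc |rfun α ξ h x - rfun α ξ h y|
      = |√(⟪ξ, α⟫ ^ 2 - ‖α‖ ^ 2 + (1 + h x) ^ 2) - √(⟪ξ, α⟫ ^ 2 - ‖α‖ ^ 2 + (1 + h y) ^ 2)| := by
        rw [rfun, rfun, add_sub_add_left_eq_sub]
    _ ≤ |(⟪ξ, α⟫ ^ 2 - ‖α‖ ^ 2 + (1 + h x) ^ 2) - (⟪ξ, α⟫ ^ 2 - ‖α‖ ^ 2 + (1 + h y) ^ 2)| / 1 :=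
        abs_sqrt_sub_sqrt_le (by linarith [hradicand x hx]) (by linarith [hradicand y hy])
          one_pos (by linarith [hsqrt x hx, hsqrt y hy])
    _ = |2 + h x + h y| * |h x - h y| := by rw [div_one, ← abs_mul]; ring_nf
    _ ≤ 3 * |h x - h y| := by gcongr

theorem norm_phifun_sub_le (hξ : ‖ξ‖ = 1) (hα : ‖α‖ < 1 / 4) (hx : |h x| ≤ 1 / 6)
    (hy : |h y| ≤ 1 / 6) : ‖phifun α ξ h x - phifun α ξ h y‖ ≤ 6 * |h x - h y| := by
  have htx : 5 / 6 ≤ 1 + h x := by linarith [abs_le.mp hx]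
  have hty : 5 / 6 ≤ 1 + h y := by linarith [abs_le.mp hy]
  have hvw : (rfun α ξ h x • ξ - α) - (rfun α ξ h y • ξ - α) =
      (rfun α ξ h x - rfun α ξ h y) • ξ := by
    rw [sub_sub_sub_cancel_right, sub_smul]
  have hinv : (1 + h x)⁻¹ ≤ 6 / 5 := by
    rw [inv_le_comm₀ (by linarith) (by norm_num)]; linarith
  calc ‖phifun α ξ h x - phifun α ξ h y‖
      ≤ (1 + h x)⁻¹ * (|rfun α ξ h x - rfun α ξ h y| + |h x - h y|) := by
        have := norm_inv_smul_sub_inv_smul_le (v := rfun α ξ h x • ξ - α) (t := 1 + h x)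
          (by linarith) (by linarith) (norm_rfun_smul_sub hξ (by linarith [norm_nonneg α]))
        rwa [hvw, norm_smul, hξ, mul_one, Real.norm_eq_abs, add_sub_add_left_eq_sub] at this
    _ ≤ 6 / 5 * (3 * |h x - h y| + |h x - h y|) := by
        gcongr; exact abs_rfun_sub_le hξ hα hx hy
    _ ≤ 6 * |h x - h y| := by linarith [abs_nonneg (h x - h y)]

end SphereMap

/-- With `h` bounded by `1/6` on `S²` and `L`-Lipschitz, `|α| < 1/4`, `ξ ∈ S²`:
`|φ(x)| = 1` on `S²`, `|r(x) − r(y)| ≤ 3|h(x) − h(y)|`,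
`|φ(x) − φ(y)| ≤ 6|h(x) − h(y)| ≤ 6L|x−y|`, and if `6L < 1` then `φ` has a unique
fixed point on `S²`. -/
theorem stmt8 (α : EuclideanSpace ℝ (Fin 3)) (hα : ‖α‖ < 1/4)
    (h : EuclideanSpace ℝ (Fin 3) → ℝ) (hh : ∀ y : EuclideanSpace ℝ (Fin 3), ‖y‖ = 1 → |h y| ≤ 1/6)
    (L : ℝ)
    (hL : ∀ x y : EuclideanSpace ℝ (Fin 3), ‖x‖ = 1 → ‖y‖ = 1 → |h x - h y| ≤ L * ‖x - y‖)
    (ξ : EuclideanSpace ℝ (Fin 3)) (hξ : ‖ξ‖ = 1) :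
    (∀ x : EuclideanSpace ℝ (Fin 3), ‖x‖ = 1 → ‖phifun α ξ h x‖ = 1) ∧
    (∀ x y : EuclideanSpace ℝ (Fin 3), ‖x‖ = 1 → ‖y‖ = 1 →
      |rfun α ξ h x - rfun α ξ h y| ≤ 3 * |h x - h y|) ∧
    (∀ x y : EuclideanSpace ℝ (Fin 3), ‖x‖ = 1 → ‖y‖ = 1 →
      ‖phifun α ξ h x - phifun α ξ h y‖ ≤ 6 * |h x - h y| ∧
      ‖phifun α ξ h x - phifun α ξ h y‖ ≤ 6 * L * ‖x - y‖) ∧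
    (6 * L < 1 → ∃! x : EuclideanSpace ℝ (Fin 3), ‖x‖ = 1 ∧ phifun α ξ h x = x) := by
  have hnorm : ∀ x : EuclideanSpace ℝ (Fin 3), ‖x‖ = 1 → ‖phifun α ξ h x‖ = 1 :=
    fun x hx ↦ norm_phifun hξ (by linarith [abs_le.mp (hh x hx)])
  have hlip : ∀ x y : EuclideanSpace ℝ (Fin 3), ‖x‖ = 1 → ‖y‖ = 1 →
      ‖phifun α ξ h x - phifun α ξ h y‖ ≤ 6 * L * ‖x - y‖ := fun x y hx hy ↦
    calc ‖phifun α ξ h x - phifun α ξ h y‖ ≤ 6 * |h x - h y| :=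
          norm_phifun_sub_le hξ hα (hh x hx) (hh y hy)
      _ ≤ 6 * (L * ‖x - y‖) := by gcongr; exact hL x y hx hy
      _ = 6 * L * ‖x - y‖ := by ring
  refine ⟨hnorm, fun x y hx hy ↦ abs_rfun_sub_le hξ hα (hh x hx) (hh y hy),
    fun x y hx hy ↦ ⟨norm_phifun_sub_le hξ hα (hh x hx) (hh y hy), hlip x y hx hy⟩, fun h6L ↦ ?_⟩
  simpa only [mem_sphere_zero_iff_norm] using
    existsUnique_fixedPoint_of_lipschitzOnWith isClosed_sphere
      ⟨ξ, mem_sphere_zero_iff_norm.mpr hξ⟩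
      (fun x hx ↦ mem_sphere_zero_iff_norm.mpr (hnorm x (mem_sphere_zero_iff_norm.mp hx)))
      (Real.toNNReal_lt_one.mpr h6L)
      (LipschitzOnWith.of_dist_le' fun x hx y hy ↦ by
        simpa only [dist_eq_norm] using
          hlip x y (mem_sphere_zero_iff_norm.mp hx) (mem_sphere_zero_iff_norm.mp hy))
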